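/- Let ε ∈ (0, 1/100], α ≥ 100, h ∈ ℝ², K₁ > 0. Let η : ℝ² → [0,1] be smooth with η(x) = 1 for |x − h| ≥ εα, ‖η − 1‖_{L²(ℝ²)} ≤ K₁ εα/ln α, and ‖∇η‖_{L²(ℝ²)} ≤ K₁/√(ln α). Let φ ∈ C_0^∞(ℝ²; ℝ²) be divergence free, let ψ : ℝ² → ℝ be smooth with ∇^⊥ψ = φ, set ψ̃(x) = ψ(x) − ψ(h) and φ_ε = ∇^⊥(η ψ̃). Then there is a universal constant C > 0 such that ‖φ_ε − φ‖_{L²(ℝ²)} ≤ C K₁ (εα/√(ln α)) · sup_{ℝ²} |φ|. -/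

import Mathlib

open MeasureTheory Real

noncomputable section

/-- The rotation by `π/2`: `x^⊥ = (−x₂, x₁)`. -/
def perp (v : EuclideanSpace ℝ (Fin 2)) : EuclideanSpace ℝ (Fin 2) :=
  EuclideanSpace.single 0 (-(v 1)) + EuclideanSpace.single 1 (v 0)

lemma perp_apply (v : EuclideanSpace ℝ (Fin 2)) (i : Fin 2) :
    perp v i = if i = 0 then -(v 1) else v 0 := by
  fin_cases i <;> simp [perp, EuclideanSpace.single_apply]

lemma perp_add (a b : EuclideanSpace ℝ (Fin 2)) : perp (a + b) = perp a + perp b := by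
  ext i; fin_cases i <;> simp [perp_apply] <;> ring

lemma perp_smul (c : ℝ) (a : EuclideanSpace ℝ (Fin 2)) : perp (c • a) = c • perp a := by
  ext i; fin_cases i <;> simp [perp_apply] <;> ring

def perpL : EuclideanSpace ℝ (Fin 2) →ₗ[ℝ] EuclideanSpace ℝ (Fin 2) where
  toFun := perp
  map_add' := perp_add
  map_smul' := perp_smul

lemma perp_continuous : Continuous perp := perpL.continuous_of_finiteDimensional

lemma norm_perp (v : EuclideanSpace ℝ (Fin 2)) : ‖perp v‖ = ‖v‖ := by
  simp [EuclideanSpace.norm_eq, Fin.sum_univ_two, perp_apply]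
  ring_nf

lemma norm_gradient_eq {f : EuclideanSpace ℝ (Fin 2) → ℝ} (x : EuclideanSpace ℝ (Fin 2)) :
    ‖gradient f x‖ = ‖fderiv ℝ f x‖ :=
  (InnerProductSpace.toDual ℝ (EuclideanSpace ℝ (Fin 2))).symm.norm_map _

lemma gradient_mul' {f g : EuclideanSpace ℝ (Fin 2) → ℝ} {x : EuclideanSpace ℝ (Fin 2)}
    (hf : DifferentiableAt ℝ f x) (hg : DifferentiableAt ℝ g x) :
    gradient (fun y => f y * g y) x = f x • gradient g x + g x • gradient f x := by
  unfold gradient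
  rw [fderiv_fun_mul hf hg, map_add, LinearIsometryEquiv.map_smul, LinearIsometryEquiv.map_smul]

lemma gradient_sub_const' {f : EuclideanSpace ℝ (Fin 2) → ℝ} (c : ℝ) (x : EuclideanSpace ℝ (Fin 2)) :
    gradient (fun y => f y - c) x = gradient f x := by
  unfold gradient
  rw [fderiv_sub_const]

lemma gradient_continuous' {f : EuclideanSpace ℝ (Fin 2) → ℝ} (hf : ContDiff ℝ (⊤ : ℕ∞) f) :
    Continuous (gradient f) :=
  ((InnerProductSpace.toDual ℝ (EuclideanSpace ℝ (Fin 2))).symm.continuous).comp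
    (hf.continuous_fderiv (by simp))


/-- With a smooth cut-off `η` equal to `1` outside `D(h, εα)` satisfying
`‖η−1‖_{L²} ≤ K₁εα/ln α` and `‖∇η‖_{L²} ≤ K₁/√(ln α)`, and `φ_ε = ∇^⊥(η ψ̃)` where
`ψ̃ = ψ − ψ(h)` is the modified stream function of the divergence-free field `φ`, one
has `‖φ_ε − φ‖_{L²} ≤ C K₁ (εα/√(ln α)) sup |φ|` for a universal constant `C > 0`. -/
theorem statement8 :
    ∃ C : ℝ, 0 < C ∧
      ∀ (ε α K₁ : ℝ) (h : EuclideanSpace ℝ (Fin 2))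
        (η : EuclideanSpace ℝ (Fin 2) → ℝ)
        (φ : EuclideanSpace ℝ (Fin 2) → EuclideanSpace ℝ (Fin 2))
        (ψ : EuclideanSpace ℝ (Fin 2) → ℝ),
        0 < ε → ε ≤ 1 / 100 → 100 ≤ α → 0 < K₁ →
        ContDiff ℝ (⊤ : ℕ∞) η → (∀ x, η x ∈ Set.Icc (0 : ℝ) 1) →
        (∀ x : EuclideanSpace ℝ (Fin 2), ε * α ≤ ‖x - h‖ → η x = 1) →
        eLpNorm (fun x => η x - 1) 2 volume
          ≤ ENNReal.ofReal (K₁ * ε * α / Real.log α) →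
        eLpNorm (fun x => gradient η x) 2 volume
          ≤ ENNReal.ofReal (K₁ / Real.sqrt (Real.log α)) →
        ContDiff ℝ (⊤ : ℕ∞) φ → HasCompactSupport φ →
        (∀ x : EuclideanSpace ℝ (Fin 2),
          fderiv ℝ φ x (EuclideanSpace.single 0 1) 0
            + fderiv ℝ φ x (EuclideanSpace.single 1 1) 1 = 0) →
        ContDiff ℝ (⊤ : ℕ∞) ψ → (∀ x, perp (gradient ψ x) = φ x) →
        eLpNorm (fun x =>
            perp (gradient (fun y => η y * (ψ y - ψ h)) x) - φ x) 2 volume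
          ≤ ENNReal.ofReal (C * K₁ * (ε * α / Real.sqrt (Real.log α))
              * ⨆ x : EuclideanSpace ℝ (Fin 2), ‖φ x‖) := by
  refine ⟨2, by norm_num, ?_⟩
  intro ε α K₁ h η φ ψ hε hε' hα hK₁ hη hη01 hη1 hηL2 hgradηL2 hφ hφsupp hdiv hψ hperp
  set S : ℝ := ⨆ x : EuclideanSpace ℝ (Fin 2), ‖φ x‖ with hSdef
  have hφc : Continuous φ := hφ.continuous
  have hbdd : BddAbove (Set.range fun x => ‖φ x‖) :=
    hφc.norm.bddAbove_range_of_hasCompactSupport hφsupp.norm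
  have hS : ∀ x, ‖φ x‖ ≤ S := fun x => le_ciSup hbdd x
  have hS0 : 0 ≤ S := le_trans (norm_nonneg _) (hS 0)
  -- positivity setup for log
  have hα0 : (0:ℝ) < α := by linarith
  have hL1 : (1:ℝ) ≤ Real.log α := by
    rw [Real.le_log_iff_exp_le hα0]
    have := Real.exp_one_lt_d9
    linarith
  have hL0 : (0:ℝ) < Real.log α := by linarith
  have hsL0 : (0:ℝ) < Real.sqrt (Real.log α) := Real.sqrt_pos.2 hL0
  have hsL1 : (1:ℝ) ≤ Real.sqrt (Real.log α) := by
    rw [show (1:ℝ) = Real.sqrt 1 by simp]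
    exact Real.sqrt_le_sqrt hL1
  have hsqrt_le : Real.sqrt (Real.log α) ≤ Real.log α := by
    nlinarith [Real.sq_sqrt hL0.le]
  -- gradient of ψ bounded by S
  have hfderivψ : ∀ x, ‖fderiv ℝ ψ x‖ ≤ S := fun x => by
    rw [← norm_gradient_eq, ← norm_perp, hperp x]; exact hS x
  -- mean value bound
  have hψlip : ∀ x : EuclideanSpace ℝ (Fin 2), ‖x - h‖ ≤ ε * α → |ψ x - ψ h| ≤ S * (ε * α) := by
    intro x hx
    have := Convex.norm_image_sub_le_of_norm_fderiv_le
      (f := ψ) (C := S) (s := Set.univ)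
      (fun y _ => (hψ.differentiable (by simp)).differentiableAt)
      (fun y _ => hfderivψ y) convex_univ (Set.mem_univ h) (Set.mem_univ x)
    calc |ψ x - ψ h| = ‖ψ x - ψ h‖ := rfl
      _ ≤ S * ‖x - h‖ := this
      _ ≤ S * (ε * α) := mul_le_mul_of_nonneg_left hx hS0
  -- gradient of η vanishes far away
  have hgradη0 : ∀ x : EuclideanSpace ℝ (Fin 2), ε * α < ‖x - h‖ → gradient η x = 0 := by
    intro x hx
    have hopen : IsOpen {y : EuclideanSpace ℝ (Fin 2) | ε * α < ‖y - h‖} :=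
      isOpen_lt continuous_const ((continuous_id.sub continuous_const).norm)
    have heq : η =ᶠ[nhds x] fun _ => (1:ℝ) :=
      Filter.eventuallyEq_of_mem (hopen.mem_nhds hx) (fun y hy => hη1 y (le_of_lt hy))
    rw [heq.gradient_eq, gradient_fun_const]
  -- pointwise identity
  have key : ∀ x, perp (gradient (fun y => η y * (ψ y - ψ h)) x) - φ x
      = (ψ x - ψ h) • perp (gradient η x) + (η x - 1) • φ x := by
    intro x
    have hψd : DifferentiableAt ℝ (fun y => ψ y - ψ h) x :=
      ((hψ.differentiable (by simp)).differentiableAt).sub_const _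
    rw [gradient_mul' ((hη.differentiable (by simp)).differentiableAt) hψd,
      gradient_sub_const' (ψ h) x, perp_add, perp_smul, perp_smul, hperp x]
    module
  have hfun : (fun x => perp (gradient (fun y => η y * (ψ y - ψ h)) x) - φ x)
      = (fun x => (ψ x - ψ h) • perp (gradient η x)) + (fun x => (η x - 1) • φ x) := by
    funext x; rw [key x]; rfl
  rw [hfun]
  -- measurability
  have hc1 : Continuous (fun x => (ψ x - ψ h) • perp (gradient η x)) :=
    (hψ.continuous.sub continuous_const).smul
      (perp_continuous.comp (gradient_continuous' hη))
  have hc2 : Continuous (fun x => (η x - 1) • φ x) :=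
    (hη.continuous.sub continuous_const).smul hφc
  -- term 1 bound
  have hb1 : eLpNorm (fun x => (ψ x - ψ h) • perp (gradient η x)) 2 volume
      ≤ ENNReal.ofReal (S * (ε * α)) * ENNReal.ofReal (K₁ / Real.sqrt (Real.log α)) := by
    have hc : ∀ᵐ x ∂(volume : Measure (EuclideanSpace ℝ (Fin 2))),
        ‖(ψ x - ψ h) • perp (gradient η x)‖₊ ≤ (S * (ε * α)).toNNReal * ‖gradient η x‖₊ := by
      refine Filter.Eventually.of_forall fun x => ?_
      rw [← NNReal.coe_le_coe, NNReal.coe_mul, coe_nnnorm, coe_nnnorm,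
        Real.coe_toNNReal _ (by positivity)]
      rw [norm_smul, norm_perp]
      rcases le_or_gt ‖x - h‖ (ε * α) with hx | hx
      · exact mul_le_mul_of_nonneg_right (by simpa using hψlip x hx) (norm_nonneg _)
      · simp [hgradη0 x hx]
    calc eLpNorm (fun x => (ψ x - ψ h) • perp (gradient η x)) 2 volume
        ≤ (S * (ε * α)).toNNReal • eLpNorm (fun x => gradient η x) 2 volume :=
          eLpNorm_le_nnreal_smul_eLpNorm_of_ae_le_mul hc 2
      _ ≤ (S * (ε * α)).toNNReal • ENNReal.ofReal (K₁ / Real.sqrt (Real.log α)) := by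
          exact mul_right_mono (a := ((S * (ε * α)).toNNReal : ENNReal)) hgradηL2
      _ = ENNReal.ofReal (S * (ε * α)) * ENNReal.ofReal (K₁ / Real.sqrt (Real.log α)) := rfl
  -- term 2 bound
  have hb2 : eLpNorm (fun x => (η x - 1) • φ x) 2 volume
      ≤ ENNReal.ofReal S * ENNReal.ofReal (K₁ * ε * α / Real.log α) := by
    have hc : ∀ᵐ x ∂(volume : Measure (EuclideanSpace ℝ (Fin 2))),
        ‖(η x - 1) • φ x‖₊ ≤ S.toNNReal * ‖η x - 1‖₊ := by
      refine Filter.Eventually.of_forall fun x => ?_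
      rw [← NNReal.coe_le_coe, NNReal.coe_mul, coe_nnnorm, coe_nnnorm,
        Real.coe_toNNReal _ hS0]
      rw [norm_smul, mul_comm]
      exact mul_le_mul_of_nonneg_right (hS x) (norm_nonneg _)
    calc eLpNorm (fun x => (η x - 1) • φ x) 2 volume
        ≤ S.toNNReal • eLpNorm (fun x => η x - 1) 2 volume :=
          eLpNorm_le_nnreal_smul_eLpNorm_of_ae_le_mul hc 2
      _ ≤ S.toNNReal • ENNReal.ofReal (K₁ * ε * α / Real.log α) :=
          mul_right_mono (a := (S.toNNReal : ENNReal)) hηL2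
      _ = ENNReal.ofReal S * ENNReal.ofReal (K₁ * ε * α / Real.log α) := rfl
  calc eLpNorm ((fun x => (ψ x - ψ h) • perp (gradient η x))
        + (fun x => (η x - 1) • φ x)) 2 volume
      ≤ eLpNorm (fun x => (ψ x - ψ h) • perp (gradient η x)) 2 volume
        + eLpNorm (fun x => (η x - 1) • φ x) 2 volume :=
        eLpNorm_add_le hc1.aestronglyMeasurable hc2.aestronglyMeasurable (by norm_num)
    _ ≤ ENNReal.ofReal (S * (ε * α)) * ENNReal.ofReal (K₁ / Real.sqrt (Real.log α))
        + ENNReal.ofReal S * ENNReal.ofReal (K₁ * ε * α / Real.log α) :=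
        add_le_add hb1 hb2
    _ = ENNReal.ofReal (S * (ε * α) * (K₁ / Real.sqrt (Real.log α))
        + S * (K₁ * ε * α / Real.log α)) := by
        rw [← ENNReal.ofReal_mul (by positivity), ← ENNReal.ofReal_mul hS0,
          ← ENNReal.ofReal_add (by positivity) (by positivity)]
    _ ≤ ENNReal.ofReal (2 * K₁ * (ε * α / Real.sqrt (Real.log α)) * S) := by
        apply ENNReal.ofReal_le_ofReal
        have hdiv : K₁ * ε * α / Real.log α ≤ K₁ * ε * α / Real.sqrt (Real.log α) := by
          gcongr
        have := mul_le_mul_of_nonneg_left hdiv hS0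
        have e1 : S * (ε * α) * (K₁ / Real.sqrt (Real.log α))
            = S * (K₁ * ε * α / Real.sqrt (Real.log α)) := by ring
        have e2 : 2 * K₁ * (ε * α / Real.sqrt (Real.log α)) * S
            = 2 * (S * (K₁ * ε * α / Real.sqrt (Real.log α))) := by ring
        linarith [this]
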